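/- (Bias extension) In the fully connected network with bias parameters, the BP bias update Δv^{l+1}_i = −α ∂E/∂v^{l+1}_i equals α·δ^l_i, and in the corresponding PCN the IL bias update Δβ^{l+1}_i = −α ∂F/∂β^{l+1}_i equals α·ε^l_i; consequently under the Z-IL conditions (γ = 1, ε^l_{i,0} = 0 for l > 0, identical weight and bias initialization) the bias updates of Z-IL and BP coincide: Δβ^{l+1}_i = Δv^{l+1}_i. -/

import Mathlib

/-!
The bias `v^{l+1}_i` enters the network only through `y^l_i`, with coefficient `1`, so
backpropagation gives `∂E/∂v^{l+1}_i = ∂E/∂y^l_i = -δ^l_i` (here `δ` is the negated gradient: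
`δ^0 = s^out - y^0`); likewise `β^{l+1}_i` enters `F` only through `ε^l_i`, with coefficient `-1`.

For Z-IL, started at the feedforward pass, induction on `t` shows that at time `t` every layer
above `t` still holds its feedforward value and the error at layer `t` is `δ^t`. The error at
layer `t + 1` is then zero, so with `γ = 1` step `t` moves `x^{t+1}` by exactly
`f'(y^{t+1}) ∑_k ε^t_k θ^{t+1}_{k,·} = δ^{t+1}`, which becomes the error at layer `t + 1`.
-/

/-- Feedforward propagation with biases from layer `l` down to layer `0`:
`y^l_i = ∑_j w^{l+1}_{i,j} f(y^{l+1}_j) + v^{l+1}_i`. -/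
noncomputable def downB (n : ℕ → ℕ) (w : ℕ → ℕ → ℕ → ℝ) (v : ℕ → ℕ → ℝ) (f : ℝ → ℝ) :
    ℕ → (ℕ → ℝ) → ℕ → ℝ
  | 0, vec => vec
  | l + 1, vec => downB n w v f l
      (fun i => (∑ j ∈ Finset.range (n (l + 1)), w (l + 1) i j * f (vec j)) + v (l + 1) i)

/-- The BP objective `E = (1/2) ∑_i (s^out_i - y^0_i)^2`. -/
noncomputable def Eobj (n0 : ℕ) (sOut v : ℕ → ℝ) : ℝ :=
  (1 / 2) * ∑ i ∈ Finset.range n0, (sOut i - v i) ^ 2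

/-- PCN prediction with bias: `μ^l_i = ∑_j θ^{l+1}_{i,j} f(x^{l+1}_j) + β^{l+1}_i`. -/
noncomputable def muB (n : ℕ → ℕ) (θ : ℕ → ℕ → ℕ → ℝ) (β : ℕ → ℕ → ℝ) (f : ℝ → ℝ)
    (x : ℕ → ℕ → ℝ) (l i : ℕ) : ℝ :=
  (∑ j ∈ Finset.range (n (l + 1)), θ (l + 1) i j * f (x (l + 1) j)) + β (l + 1) i

/-- PCN free energy with biases. -/
noncomputable def FB (L : ℕ) (n : ℕ → ℕ) (θ : ℕ → ℕ → ℕ → ℝ) (β : ℕ → ℕ → ℝ)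
    (f : ℝ → ℝ) (x : ℕ → ℕ → ℝ) : ℝ :=
  ∑ l ∈ Finset.range L, ∑ i ∈ Finset.range (n l),
    (1 / 2) * (x l i - muB n θ β f x l i) ^ 2

open Finset

/-- The prediction error `ε^l_i` of the PCN state `x`. -/
noncomputable def predErr (n : ℕ → ℕ) (θ : ℕ → ℕ → ℕ → ℝ) (β : ℕ → ℕ → ℝ) (f : ℝ → ℝ)
    (x : ℕ → ℕ → ℝ) (l i : ℕ) : ℝ :=
  x l i - muB n θ β f x l i

/-- Gradient descent on the free energy with rate `γ` in the hidden layers `0 < l < L`;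
the clamped layers `0` and `L` are left unconstrained. -/
def IsInferenceStep (L : ℕ) (n : ℕ → ℕ) (θ : ℕ → ℕ → ℕ → ℝ) (β : ℕ → ℕ → ℝ) (f : ℝ → ℝ)
    (γ : ℝ) (x x' : ℕ → ℕ → ℝ) : Prop :=
  ∀ l, 0 < l → l < L → ∀ i, x' l i = x l i + γ *
    (-predErr n θ β f x l i +
      deriv f (x l i) * ∑ k ∈ range (n (l - 1)), predErr n θ β f x (l - 1) k * θ l k i)

section Backprop

variable {n : ℕ → ℕ} {θ : ℕ → ℕ → ℕ → ℝ} {β : ℕ → ℕ → ℝ} {f : ℝ → ℝ}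

theorem hasDerivAt_Eobj {n₀ : ℕ} {sOut : ℕ → ℝ} {v : ℝ → ℕ → ℝ} {d : ℕ → ℝ} {t₀ : ℝ}
    (hv : ∀ j, HasDerivAt (fun t => v t j) (d j) t₀) :
    HasDerivAt (fun t => Eobj n₀ sOut (v t)) (-∑ j ∈ range n₀, (sOut j - v t₀ j) * d j) t₀ := by
  have h := (HasDerivAt.fun_sum fun j (_ : j ∈ range n₀) =>
    ((hv j).const_sub (sOut j)).fun_pow 2).const_mul (1 / 2 : ℝ)
  refine h.congr_deriv ?_
  rw [mul_sum, ← sum_neg_distrib]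
  refine sum_congr rfl fun j _ => ?_
  push_cast
  ring

theorem hasDerivAt_layer (hf : Differentiable ℝ f) {m : ℕ} {w : ℕ → ℝ} {b : ℝ}
    {v : ℝ → ℕ → ℝ} {d : ℕ → ℝ} {t₀ : ℝ} (hv : ∀ j, HasDerivAt (fun t => v t j) (d j) t₀) :
    HasDerivAt (fun t => (∑ j ∈ range m, w j * f (v t j)) + b)
      (∑ j ∈ range m, w j * (deriv f (v t₀ j) * d j)) t₀ :=
  (HasDerivAt.fun_sum fun j _ =>
    (((hf (v t₀ j)).hasDerivAt).comp t₀ (hv j)).const_mul (w j)).add_const b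

theorem hasDerivAt_Eobj_downB (hf : Differentiable ℝ f) {L : ℕ} {sOut : ℕ → ℝ}
    {y δ : ℕ → ℕ → ℝ} (hy : ∀ l < L, ∀ i, y l i = muB n θ β f y l i)
    (hδ0 : ∀ i, δ 0 i = sOut i - y 0 i)
    (hδS : ∀ l, 0 < l → l < L → ∀ i,
      δ l i = deriv f (y l i) * ∑ k ∈ range (n (l - 1)), δ (l - 1) k * θ l k i)
    {l : ℕ} (hl : l < L) {v : ℝ → ℕ → ℝ} {d : ℕ → ℝ} {t₀ : ℝ} (hv₀ : ∀ j, v t₀ j = y l j)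
    (hv : ∀ j, HasDerivAt (fun t => v t j) (d j) t₀) :
    HasDerivAt (fun t => Eobj (n 0) sOut (downB n θ β f l (v t)))
      (-∑ j ∈ range (n l), δ l j * d j) t₀ := by
  induction l generalizing v d with
  | zero =>
    refine (hasDerivAt_Eobj hv).congr_deriv ?_
    simp only [hδ0, hv₀]
  | succ l ih =>
    have hδ : ∀ j, δ (l + 1) j =
        deriv f (v t₀ j) * ∑ k ∈ range (n l), δ l k * θ (l + 1) k j := fun j => by
      rw [hv₀, hδS (l + 1) l.succ_pos hl j, Nat.add_sub_cancel]
    refine (ih (by omega) (fun k => ?_) fun k => hasDerivAt_layer hf hv).congr_deriv ?_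
    · simp only [hv₀]
      exact (hy l (by omega) k).symm
    · simp only [hδ, mul_sum, sum_mul]
      rw [sum_comm]
      exact congrArg _ (sum_congr rfl fun j _ => sum_congr rfl fun k _ => by ring)

theorem hasDerivAt_Eobj_downB_bias (hf : Differentiable ℝ f) {L : ℕ} {sOut : ℕ → ℝ}
    {y δ : ℕ → ℕ → ℝ} (hy : ∀ l < L, ∀ i, y l i = muB n θ β f y l i)
    (hδ0 : ∀ i, δ 0 i = sOut i - y 0 i)
    (hδS : ∀ l, 0 < l → l < L → ∀ i,
      δ l i = deriv f (y l i) * ∑ k ∈ range (n (l - 1)), δ (l - 1) k * θ l k i)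
    {l i : ℕ} (hl : l < L) (hi : i < n l) :
    HasDerivAt (fun c => Eobj (n 0) sOut (downB n θ β f l (fun i' =>
        (∑ j ∈ range (n (l + 1)), θ (l + 1) i' j * f (y (l + 1) j)) +
          (if i' = i then c else β (l + 1) i')))) (-δ l i) (β (l + 1) i) := by
  refine (hasDerivAt_Eobj_downB hf hy hδ0 hδS hl (d := fun j => if j = i then 1 else 0)
    (fun j => ?_) (fun j => ?_)).congr_deriv ?_
  · rw [hy l hl j]
    split_ifs with h <;> simp only [muB, h]
  · split_ifs
    · exact (hasDerivAt_id _).const_add _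
    · exact hasDerivAt_const _ _
  · simp [hi]

end Backprop

theorem hasDerivAt_FB_bias (L : ℕ) (n : ℕ → ℕ) (θ : ℕ → ℕ → ℕ → ℝ) (β : ℕ → ℕ → ℝ)
    (f : ℝ → ℝ) (x : ℕ → ℕ → ℝ) {l i : ℕ} (hl : l < L) (hi : i < n l) :
    HasDerivAt (fun c => FB L n θ (fun l' i' => if l' = l + 1 ∧ i' = i then c else β l' i') f x)
      (-predErr n θ β f x l i) (β (l + 1) i) := by
  have hterm : ∀ l' i', HasDerivAt (fun c => (1 / 2 : ℝ) * (x l' i' -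
      muB n θ (fun l'' i'' => if l'' = l + 1 ∧ i'' = i then c else β l'' i'') f x l' i') ^ 2)
      (if l' = l ∧ i' = i then -predErr n θ β f x l i else 0) (β (l + 1) i) := by
    intro l' i'
    by_cases h : l' = l ∧ i' = i
    · obtain ⟨rfl, rfl⟩ := h
      simp only [muB, and_self, if_true]
      refine ((((hasDerivAt_id _).const_add _).const_sub _).fun_pow 2
        |>.const_mul _).congr_deriv ?_
      simp only [predErr, muB]
      ring
    · have h' : ¬(l' + 1 = l + 1 ∧ i' = i) := by omega
      simp only [muB, h, h', if_false]
      exact hasDerivAt_const _ _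
  refine (HasDerivAt.fun_sum fun l' _ =>
    HasDerivAt.fun_sum fun i' _ => hterm l' i').congr_deriv ?_
  simp [ite_and, hl, hi]

section ZeroDivergence

variable {L : ℕ} {n : ℕ → ℕ} {θ : ℕ → ℕ → ℕ → ℝ} {β : ℕ → ℕ → ℝ} {f : ℝ → ℝ}
  {y : ℕ → ℕ → ℝ}

theorem muB_congr_succ {x x' : ℕ → ℕ → ℝ} {l : ℕ} (h : ∀ j, x (l + 1) j = x' (l + 1) j)
    (i : ℕ) : muB n θ β f x l i = muB n θ β f x' l i := by
  simp only [muB, h]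

theorem predErr_eq_zero_of_eq (hy : ∀ l < L, ∀ i, y l i = muB n θ β f y l i)
    {x : ℕ → ℕ → ℝ} {l : ℕ} (hl : l < L) (hx : ∀ i, x l i = y l i)
    (hx' : ∀ j, x (l + 1) j = y (l + 1) j) (i : ℕ) : predErr n θ β f x l i = 0 := by
  rw [predErr, hx, muB_congr_succ hx', ← hy l hl, sub_self]

theorem eq_of_eq_top_of_forall_eq_muB (hy : ∀ l < L, ∀ i, y l i = muB n θ β f y l i)
    {x : ℕ → ℕ → ℝ} {m : ℕ} (htop : ∀ i, x L i = y L i)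
    (hx : ∀ l, m ≤ l → l < L → ∀ i, x l i = muB n θ β f x l i)
    {l : ℕ} (hml : m ≤ l) (hlL : l ≤ L) (i : ℕ) : x l i = y l i := by
  induction hlL using Nat.decreasingInduction generalizing i with
  | self => exact htop i
  | of_succ k hk ih =>
    rw [hx k hml hk i, hy k hk i]
    exact muB_congr_succ (fun j => ih (by omega) j) i

theorem IsInferenceStep.eq_above_succ {γ : ℝ} {x x' : ℕ → ℕ → ℝ}
    (hstep : IsInferenceStep L n θ β f γ x x') (hy : ∀ l < L, ∀ i, y l i = muB n θ β f y l i)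
    (htop : ∀ i, x' L i = y L i) {t : ℕ} (hx : ∀ l, t + 1 ≤ l → l ≤ L → ∀ i, x l i = y l i)
    {l : ℕ} (htl : t + 2 ≤ l) (hlL : l ≤ L) (i : ℕ) : x' l i = y l i := by
  obtain rfl | hlL := hlL.eq_or_lt
  · exact htop i
  obtain ⟨k, rfl⟩ : ∃ k, l = k + 1 := ⟨l - 1, by omega⟩
  have hεk : ∀ j, predErr n θ β f x k j = 0 :=
    predErr_eq_zero_of_eq hy (by omega) (hx k (by omega) (by omega)) (hx (k + 1) (by omega) hlL.le)
  rw [hstep (k + 1) k.succ_pos hlL i, Nat.add_sub_cancel,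
    predErr_eq_zero_of_eq hy hlL (hx (k + 1) (by omega) hlL.le) (hx (k + 2) (by omega) hlL) i,
    hx (k + 1) (by omega) hlL.le i]
  simp only [hεk, zero_mul, sum_const_zero, mul_zero, neg_zero, add_zero]

theorem IsInferenceStep.predErr_succ_eq {x x' : ℕ → ℕ → ℝ} {δ : ℕ → ℕ → ℝ}
    (hstep : IsInferenceStep L n θ β f 1 x x') (hy : ∀ l < L, ∀ i, y l i = muB n θ β f y l i)
    (hδS : ∀ l, 0 < l → l < L → ∀ i,
      δ l i = deriv f (y l i) * ∑ k ∈ range (n (l - 1)), δ (l - 1) k * θ l k i)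
    {t : ℕ} (ht : t + 1 < L) (hx : ∀ l, t + 1 ≤ l → l ≤ L → ∀ i, x l i = y l i)
    (hεt : ∀ k, predErr n θ β f x t k = δ t k) (hx' : ∀ j, x' (t + 2) j = y (t + 2) j)
    (i : ℕ) : predErr n θ β f x' (t + 1) i = δ (t + 1) i := by
  have hx₁ := hx (t + 1) le_rfl ht.le
  rw [predErr, hstep (t + 1) t.succ_pos ht i, Nat.add_sub_cancel,
    predErr_eq_zero_of_eq hy ht hx₁ (hx (t + 2) (by omega) ht) i, muB_congr_succ hx' i,
    ← hy (t + 1) ht i, hx₁ i, hδS (t + 1) t.succ_pos ht i, Nat.add_sub_cancel]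
  simp only [hεt]
  ring

theorem zil_eq_feedforward {γ : ℝ} {X : ℕ → ℕ → ℕ → ℝ}
    (hy : ∀ l < L, ∀ i, y l i = muB n θ β f y l i) (htop : ∀ t i, X t L i = y L i)
    (hstep : ∀ t, IsInferenceStep L n θ β f γ (X t) (X (t + 1)))
    (hinit : ∀ l, 1 ≤ l → l < L → ∀ i, X 0 l i = muB n θ β f (X 0) l i) (t : ℕ) :
    ∀ l, t + 1 ≤ l → l ≤ L → ∀ i, X t l i = y l i := by
  induction t with
  | zero => exact fun l h₁ h₂ => eq_of_eq_top_of_forall_eq_muB hy (htop 0) hinit h₁ h₂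
  | succ t ih => exact fun l h₁ h₂ => (hstep t).eq_above_succ hy (htop (t + 1)) ih h₁ h₂

theorem zil_predErr_eq {X : ℕ → ℕ → ℕ → ℝ} {sOut : ℕ → ℝ} {δ : ℕ → ℕ → ℝ}
    (hy : ∀ l < L, ∀ i, y l i = muB n θ β f y l i) (hδ0 : ∀ i, δ 0 i = sOut i - y 0 i)
    (hδS : ∀ l, 0 < l → l < L → ∀ i,
      δ l i = deriv f (y l i) * ∑ k ∈ range (n (l - 1)), δ (l - 1) k * θ l k i)
    (htop : ∀ t i, X t L i = y L i) (hout : ∀ t i, X t 0 i = sOut i)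
    (hstep : ∀ t, IsInferenceStep L n θ β f 1 (X t) (X (t + 1)))
    (hinit : ∀ l, 1 ≤ l → l < L → ∀ i, X 0 l i = muB n θ β f (X 0) l i)
    {t : ℕ} (ht : t < L) (i : ℕ) : predErr n θ β f (X t) t i = δ t i := by
  have hX := zil_eq_feedforward hy htop hstep hinit
  induction t generalizing i with
  | zero => rw [predErr, hout, muB_congr_succ (hX 0 1 le_rfl ht), ← hy 0 ht, hδ0]
  | succ t ih =>
    exact (hstep t).predErr_succ_eq hy hδS ht (hX t) (ih (by omega))
      (hX (t + 1) (t + 2) le_rfl ht) i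

end ZeroDivergence

/-- bias extension: in the fully connected network with biases, the BP
bias update `Δv^{l+1}_i = −α ∂E/∂v^{l+1}_i` equals `α δ^l_i`; in the corresponding PCN
the IL bias update `Δβ^{l+1}_i = −α ∂F/∂β^{l+1}_i` equals `α ε^l_i`; and under the Z-IL
conditions (`γ = 1`, `ε^l_{i,0} = 0` for `l > 0`, identical weight and bias
initialization) the bias updates of Z-IL and BP coincide:
`Δβ^{l+1}_i = α ε^l_{i,l} = α δ^l_i = Δv^{l+1}_i`. -/
theorem bias_extension
    (L : ℕ) (hL : 0 < L) (n : ℕ → ℕ) (θ : ℕ → ℕ → ℕ → ℝ) (β : ℕ → ℕ → ℝ)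
    (f : ℝ → ℝ) (hf : Differentiable ℝ f)
    (sIn sOut : ℕ → ℝ) (α γ : ℝ) (hγ : γ = 1)
    -- the ANN (identical weights `θ` and biases `β`)
    (y : ℕ → ℕ → ℝ)
    (hyL : ∀ i, y L i = sIn i)
    (hyRec : ∀ l < L, ∀ i,
      y l i = (∑ j ∈ Finset.range (n (l + 1)), θ (l + 1) i j * f (y (l + 1) j)) + β (l + 1) i)
    (δ : ℕ → ℕ → ℝ)
    (hδ0 : ∀ i, δ 0 i = sOut i - y 0 i)
    (hδS : ∀ l, 0 < l → l < L → ∀ i,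
      δ l i = deriv f (y l i) * ∑ k ∈ Finset.range (n (l - 1)), δ (l - 1) k * θ l k i)
    -- the PCN trajectory trained with Z-IL
    (X : ℕ → ℕ → ℕ → ℝ)
    (hclampIn : ∀ t i, X t L i = sIn i)
    (hclampOut : ∀ t i, X t 0 i = sOut i)
    (hdyn : ∀ t, ∀ l, 0 < l → l < L → ∀ i,
      X (t + 1) l i = X t l i + γ *
        (-(X t l i - muB n θ β f (X t) l i) +
          deriv f (X t l i) *
            ∑ k ∈ Finset.range (n (l - 1)),
              (X t (l - 1) k - muB n θ β f (X t) (l - 1) k) * θ l k i))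
    (hinit : ∀ l, 1 ≤ l → l ≤ L - 1 → ∀ i, X 0 l i = muB n θ β f (X 0) l i) :
    -- (a) BP bias update: −α ∂E/∂v^{l+1}_i = α δ^l_i
    (∀ l ≤ L - 1, ∀ i < n l,
      -α * deriv (fun c => Eobj (n 0) sOut (downB n θ β f l (fun i' =>
          (∑ j ∈ Finset.range (n (l + 1)), θ (l + 1) i' j * f (y (l + 1) j)) +
            (if i' = i then c else β (l + 1) i')))) (β (l + 1) i)
        = α * δ l i) ∧
    -- (b) IL bias update: −α ∂F/∂β^{l+1}_i = α ε^l_i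
    (∀ x : ℕ → ℕ → ℝ, ∀ l < L, ∀ i < n l,
      -α * deriv (fun c => FB L n θ
          (fun l' i' => if l' = l + 1 ∧ i' = i then c else β l' i') f x) (β (l + 1) i)
        = α * (x l i - muB n θ β f x l i)) ∧
    -- (c) Z-IL bias update equals BP bias update
    (∀ l ≤ L - 1, ∀ i, α * (X l l i - muB n θ β f (X l) l i) = α * δ l i) := by
  have hy : ∀ l < L, ∀ i, y l i = muB n θ β f y l i := hyRec
  refine ⟨fun l hl i hi => ?_, fun x l hl i hi => ?_, fun l hl i => ?_⟩
  · rw [(hasDerivAt_Eobj_downB_bias hf hy hδ0 hδS (by omega) hi).deriv]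
    ring
  · rw [(hasDerivAt_FB_bias L n θ β f x hl hi).deriv, predErr]
    ring
  · subst hγ
    have htop : ∀ t i, X t L i = y L i := fun t i => (hclampIn t i).trans (hyL i).symm
    exact congrArg (α * ·) (zil_predErr_eq hy hδ0 hδS htop hclampOut hdyn
      (fun l h₁ h₂ => hinit l h₁ (by omega)) (by omega) i)
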